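/- (Gaussian mechanism satisfies zCDP) Let Q: 𝒳ⁿ → ℝ^m have ℓ₂-sensitivity Δ = max over neighboring D, D' of ‖Q(D) - Q(D')‖₂. For ρ > 0, the mechanism M(D) = Q(D) + N(0, (Δ²/(2ρ))·I_m) satisfies ρ-zCDP. -/

import Mathlib

open MeasureTheory

/-- The density of the Gaussian `N(μ, v·I_m)` on `ℝ^m`. -/
noncomputable def gaussPdf {m : ℕ} (μ : EuclideanSpace ℝ (Fin m)) (v : ℝ)
    (x : EuclideanSpace ℝ (Fin m)) : ℝ :=
  (2 * Real.pi * v) ^ (-(m : ℝ) / 2) * Real.exp (-‖x - μ‖ ^ 2 / (2 * v))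

/-- The `a`-Rényi divergence between two probability densities on `ℝ^m`. -/
noncomputable def renyiDivDensity {m : ℕ} (a : ℝ)
    (p q : EuclideanSpace ℝ (Fin m) → ℝ) : ℝ :=
  (a - 1)⁻¹ * Real.log (∫ x, p x ^ a * q x ^ (1 - a))

/-! The product `p^a q^(1-a)` of two Gaussian densities with the same covariance is, after
completing the square in the exponent, a constant `exp (a(a-1)‖μ-μ'‖²/(2v))` times a Gaussian
density; the latter integrates to `1`, so the Rényi divergence is `a‖μ-μ'‖²/(2v)`, and the
sensitivity bound with `v = Δ²/(2ρ)` gives `ρa`. -/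

lemma mul_norm_sub_sq_add_mul_norm_sub_sq {E : Type*} [NormedAddCommGroup E]
    [InnerProductSpace ℝ E] (a : ℝ) (x μ μ' : E) :
    a * ‖x - μ‖ ^ 2 + (1 - a) * ‖x - μ'‖ ^ 2
      = ‖x - (μ + (1 - a) • (μ' - μ))‖ ^ 2 + a * (1 - a) * ‖μ - μ'‖ ^ 2 := by
  set y := x - (μ + (1 - a) • (μ' - μ))
  set w := μ' - μ with hw
  have hμ : x - μ = y + (1 - a) • w := by simp only [y, w]; abel
  have hμ' : x - μ' = y - a • w := by simp only [y, w]; module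
  clear_value y w
  rw [hμ, hμ', norm_sub_rev μ, ← hw, norm_add_sq_real, norm_sub_sq_real, real_inner_smul_right,
    real_inner_smul_right, norm_smul, norm_smul, mul_pow, mul_pow, Real.norm_eq_abs,
    Real.norm_eq_abs, sq_abs, sq_abs]
  ring

lemma integral_gaussPdf {m : ℕ} (μ : EuclideanSpace ℝ (Fin m)) {v : ℝ} (hv : 0 < v) :
    ∫ x, gaussPdf μ v x = 1 := by
  have hshift : ∫ x : EuclideanSpace ℝ (Fin m), Real.exp (-‖x - μ‖ ^ 2 / (2 * v))
      = ∫ x : EuclideanSpace ℝ (Fin m), Real.exp (-(1 / (2 * v)) * ‖x‖ ^ 2) := by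
    rw [← integral_sub_right_eq_self (fun x ↦ Real.exp (-(1 / (2 * v)) * ‖x‖ ^ 2)) μ]
    congr 1 with x
    ring_nf
  have hπ : Real.pi / (1 / (2 * v)) = 2 * Real.pi * v := by field_simp
  unfold gaussPdf
  rw [integral_const_mul, hshift, GaussianFourier.integral_rexp_neg_mul_sq_norm (by positivity),
    finrank_euclideanSpace_fin, hπ, ← Real.rpow_add (by positivity), neg_div, neg_add_cancel,
    Real.rpow_zero]

lemma gaussPdf_rpow_mul_gaussPdf_rpow {m : ℕ} (a : ℝ) {v : ℝ} (hv : 0 < v)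
    (μ μ' x : EuclideanSpace ℝ (Fin m)) :
    gaussPdf μ v x ^ a * gaussPdf μ' v x ^ (1 - a)
      = Real.exp (a * (a - 1) * ‖μ - μ'‖ ^ 2 / (2 * v))
          * gaussPdf (μ + (1 - a) • (μ' - μ)) v x := by
  set C := (2 * Real.pi * v) ^ (-(m : ℝ) / 2)
  have hC : 0 < C := by positivity
  have hCC : C ^ a * C ^ (1 - a) = C := by rw [← Real.rpow_add hC]; norm_num
  have hexp : -‖x - μ‖ ^ 2 / (2 * v) * a + -‖x - μ'‖ ^ 2 / (2 * v) * (1 - a)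
      = a * (a - 1) * ‖μ - μ'‖ ^ 2 / (2 * v)
          + -‖x - (μ + (1 - a) • (μ' - μ))‖ ^ 2 / (2 * v) := by
    linear_combination (-1 / (2 * v)) * mul_norm_sub_sq_add_mul_norm_sub_sq a x μ μ'
  unfold gaussPdf
  rw [Real.mul_rpow hC.le (Real.exp_pos _).le, Real.mul_rpow hC.le (Real.exp_pos _).le,
    ← Real.exp_mul, ← Real.exp_mul]
  calc C ^ a * Real.exp (-‖x - μ‖ ^ 2 / (2 * v) * a)
        * (C ^ (1 - a) * Real.exp (-‖x - μ'‖ ^ 2 / (2 * v) * (1 - a)))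
      = (C ^ a * C ^ (1 - a))
          * Real.exp (-‖x - μ‖ ^ 2 / (2 * v) * a + -‖x - μ'‖ ^ 2 / (2 * v) * (1 - a)) := by
        rw [Real.exp_add]; ring
    _ = _ := by rw [hCC, hexp, Real.exp_add]; ring

lemma renyiDivDensity_gaussPdf {m : ℕ} {a v : ℝ} (ha : a ≠ 1) (hv : 0 < v)
    (μ μ' : EuclideanSpace ℝ (Fin m)) :
    renyiDivDensity a (gaussPdf μ v) (gaussPdf μ' v) = a * ‖μ - μ'‖ ^ 2 / (2 * v) := by
  have ha1 : a - 1 ≠ 0 := sub_ne_zero.mpr ha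
  unfold renyiDivDensity
  simp_rw [gaussPdf_rpow_mul_gaussPdf_rpow a hv μ μ', integral_const_mul, integral_gaussPdf _ hv,
    mul_one, Real.log_exp]
  field_simp

/-- The Gaussian mechanism satisfies `ρ`-zCDP: if `Q` has `ℓ₂`-sensitivity at
most `Δ` over neighboring datasets, then adding `N(0, (Δ²/(2ρ))·I_m)` noise to
`Q(D)` yields output distributions on neighboring datasets whose `a`-Rényi
divergence is at most `ρ·a` for all `a ∈ (1, ∞)`. -/
theorem gaussian_mechanism_zCDP {DS : Type*} {m : ℕ}
    (neighbor : DS → DS → Prop) (Q : DS → EuclideanSpace ℝ (Fin m))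
    (Δ : ℝ) (hΔ : 0 < Δ)
    (hsens : ∀ D D', neighbor D D' → ‖Q D - Q D'‖ ≤ Δ)
    (ρ : ℝ) (hρ : 0 < ρ) :
    ∀ D D', neighbor D D' → ∀ a : ℝ, 1 < a →
      renyiDivDensity a (gaussPdf (Q D) (Δ ^ 2 / (2 * ρ)))
        (gaussPdf (Q D') (Δ ^ 2 / (2 * ρ))) ≤ ρ * a := by
  intro D D' hN a ha
  have hv : 0 < Δ ^ 2 / (2 * ρ) := by positivity
  rw [renyiDivDensity_gaussPdf ha.ne' hv]
  calc a * ‖Q D - Q D'‖ ^ 2 / (2 * (Δ ^ 2 / (2 * ρ)))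
      ≤ a * Δ ^ 2 / (2 * (Δ ^ 2 / (2 * ρ))) := by
        have ha₀ : 0 ≤ a := by linarith
        gcongr
        exact hsens D D' hN
    _ = ρ * a := by field_simp
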